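/- Optimality of the spectral-embedding PCA value: for every matrix H ∈ ℝ^{n×k} and every diagonal matrix W ∈ ℝ^{k×k}, one has ‖𝒜 − H W Hᵀ‖_F² ≥ Σ_{i=k+1}^n (2−λ_i)². Hence the minimum of ‖𝒜 − H W Hᵀ‖_F² over all H ∈ ℝ^{n×k} and diagonal W ∈ ℝ^{k×k} equals Σ_{i=k+1}^n (2−λ_i)². -/

import Mathlib

open Matrix BigOperators

namespace PCAAux


lemma frob_eq_trace {n m : ℕ} (X : Matrix (Fin n) (Fin m) ℝ) :
    ∑ i, ∑ j, X i j ^ 2 = (Xᵀ * X).trace := by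
  rw [Matrix.trace, Finset.sum_comm]
  refine Finset.sum_congr rfl fun j _ => ?_
  simp only [Matrix.diag, Matrix.mul_apply, Matrix.transpose_apply]
  exact Finset.sum_congr rfl fun i _ => sq (X i j)

lemma frob_conj {n : ℕ} (U X : Matrix (Fin n) (Fin n) ℝ)
    (hU1 : Uᵀ * U = 1) (hU2 : U * Uᵀ = 1) :
    ∑ i, ∑ j, ((Uᵀ * X * U) i j) ^ 2 = ∑ i, ∑ j, X i j ^ 2 := by
  rw [frob_eq_trace, frob_eq_trace]
  have h1 : (Uᵀ * X * U)ᵀ * (Uᵀ * X * U) = Uᵀ * (Xᵀ * X) * U := by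
    simp only [Matrix.transpose_mul, Matrix.transpose_transpose]
    calc Uᵀ * (Xᵀ * U) * (Uᵀ * X * U) = Uᵀ * (Xᵀ * ((U * Uᵀ) * (X * U))) := by
          simp only [Matrix.mul_assoc]
      _ = Uᵀ * (Xᵀ * X) * U := by rw [hU2, Matrix.one_mul]; simp only [Matrix.mul_assoc]
  rw [h1, Matrix.mul_assoc, Matrix.trace_mul_comm, Matrix.mul_assoc, hU2, Matrix.mul_one]

lemma frob_mul_le {n m : ℕ} (X : Matrix (Fin n) (Fin n) ℝ) (V : Matrix (Fin n) (Fin m) ℝ)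
    (hV : Vᵀ * V = 1) :
    ((X * V)ᵀ * (X * V)).trace ≤ (Xᵀ * X).trace := by
  set Q : Matrix (Fin n) (Fin n) ℝ := 1 - V * Vᵀ with hQ
  have hQsymm : Qᵀ = Q := by simp [hQ, Matrix.transpose_sub, Matrix.transpose_mul]
  have hQidem : Q * Q = Q := by
    simp only [hQ, Matrix.sub_mul, Matrix.mul_sub, Matrix.one_mul, Matrix.mul_one]
    have : V * Vᵀ * (V * Vᵀ) = V * Vᵀ := by
      calc V * Vᵀ * (V * Vᵀ) = V * (Vᵀ * V) * Vᵀ := by simp only [Matrix.mul_assoc]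
        _ = V * Vᵀ := by rw [hV, Matrix.mul_one]
    rw [this]; abel
  have key : (Xᵀ * X).trace - ((X * V)ᵀ * (X * V)).trace = ((X * Q)ᵀ * (X * Q)).trace := by
    have h1 : (X * V)ᵀ * (X * V) = Vᵀ * (Xᵀ * X) * V := by
      simp only [Matrix.transpose_mul]; simp only [Matrix.mul_assoc]
    have h2 : (X * Q)ᵀ * (X * Q) = Q * (Xᵀ * X) * Q := by
      simp only [Matrix.transpose_mul, hQsymm]; simp only [Matrix.mul_assoc]
    rw [h1, h2]
    have h3 : ((Q * (Xᵀ * X)) * Q).trace = ((Xᵀ * X) * Q).trace := by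
      rw [Matrix.trace_mul_cycle, hQidem, Matrix.trace_mul_comm]
    have h4 : ((Vᵀ * (Xᵀ * X)) * V).trace = ((Xᵀ * X) * (V * Vᵀ)).trace := by
      rw [Matrix.trace_mul_cycle']
      simp only [Matrix.mul_assoc]
    rw [h3, h4, hQ, Matrix.mul_sub, Matrix.mul_one, Matrix.trace_sub]
  have h5 : 0 ≤ ((X * Q)ᵀ * (X * Q)).trace := by
    rw [← frob_eq_trace]; positivity
  linarith



lemma card_filter_le (n k : ℕ) :
    (Finset.univ.filter (fun a : Fin n => k ≤ (a : ℕ))).card = n - k := by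
  have h1 : (Finset.univ.filter (fun a : Fin n => k ≤ (a : ℕ))).card
      = ((Finset.range n).filter (fun a : ℕ => k ≤ a)).card := by
    refine Finset.card_nbij (i := fun a : Fin n => (a : ℕ)) ?_ ?_ ?_
    · intro a ha
      simp only [Finset.mem_coe, Finset.mem_filter, Finset.mem_univ, true_and] at ha
      simp [a.isLt, ha]
    · intro a _ b _ h; exact Fin.ext h
    · intro b hb
      simp only [Finset.coe_filter, Finset.mem_range, Set.mem_setOf_eq] at hb
      exact ⟨⟨b, hb.1⟩, by simp [hb.2], rfl⟩
  have h2 : (Finset.range n).filter (fun a : ℕ => k ≤ a) = Finset.Ico k n := by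
    ext a; simp [Finset.mem_Ico, and_comm]
  rw [h1, h2, Nat.card_Ico]

lemma rearrange (n k : ℕ) (hkn : k < n) (ν c : Fin n → ℝ) (hν : Antitone ν)
    (hc0 : ∀ a, 0 ≤ c a) (hc1 : ∀ a, c a ≤ 1)
    (hsum : ∑ a, c a = ((n - k : ℕ) : ℝ)) :
    ∑ a ∈ Finset.univ.filter (fun a : Fin n => k ≤ (a : ℕ)), ν a ≤ ∑ a, ν a * c a := by
  set t : ℝ := ν ⟨k, hkn⟩ with ht
  set χ : Fin n → ℝ := fun a => if k ≤ (a : ℕ) then 1 else 0 with hχ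
  have hχsum : ∑ a, χ a = ((n - k : ℕ) : ℝ) := by
    rw [hχ, Finset.sum_boole, card_filter_le n k]
  have key : ∀ a : Fin n, 0 ≤ (ν a - t) * (c a - χ a) := by
    intro a
    by_cases h : k ≤ (a : ℕ)
    · have h1 : ν a ≤ t := hν (by simpa [Fin.le_def] using h)
      have h2 : c a - χ a ≤ 0 := by simp [hχ, h]; linarith [hc1 a]
      nlinarith
    · have h1 : t ≤ ν a := hν (by simp [Fin.le_def]; omega)
      have h2 : 0 ≤ c a - χ a := by simp [hχ, h]; exact hc0 a
      exact mul_nonneg (by linarith) h2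
  have hsum0 : 0 ≤ ∑ a, (ν a - t) * (c a - χ a) := Finset.sum_nonneg fun a _ => key a
  have expand : ∑ a, (ν a - t) * (c a - χ a)
      = ∑ a, ν a * c a - ∑ a, ν a * χ a - t * ∑ a, c a + t * ∑ a, χ a := by
    rw [Finset.mul_sum, Finset.mul_sum, ← Finset.sum_sub_distrib, ← Finset.sum_sub_distrib,
      ← Finset.sum_add_distrib]
    exact Finset.sum_congr rfl fun a _ => by ring
  have hfilter : ∑ a ∈ Finset.univ.filter (fun a : Fin n => k ≤ (a : ℕ)), ν a
      = ∑ a, ν a * χ a := by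
    rw [Finset.sum_filter]
    exact Finset.sum_congr rfl fun a _ => by by_cases h : k ≤ (a : ℕ) <;> simp [hχ, h]
  rw [expand, hsum, hχsum] at hsum0
  rw [hfilter]; linarith



lemma exists_V (n k : ℕ) (M : Matrix (Fin k) (Fin n) ℝ) :
    ∃ V : Matrix (Fin n) (Fin (n - k)) ℝ, Vᵀ * V = 1 ∧ M * V = 0 := by
  classical
  let e : EuclideanSpace ℝ (Fin n) ≃ₗ[ℝ] (Fin n → ℝ) := WithLp.linearEquiv 2 ℝ (Fin n → ℝ)
  let f : EuclideanSpace ℝ (Fin n) →ₗ[ℝ] (Fin k → ℝ) := M.mulVecLin ∘ₗ e.toLinearMap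
  set K := LinearMap.ker f with hK
  have hrange : Module.finrank ℝ (LinearMap.range f) ≤ k := by
    have h := Submodule.finrank_le (LinearMap.range f)
    simpa using h
  have hdim : n - k ≤ Module.finrank ℝ K := by
    have h := LinearMap.finrank_range_add_finrank_ker f
    have hn : Module.finrank ℝ (EuclideanSpace ℝ (Fin n)) = n := finrank_euclideanSpace_fin
    rw [← hK] at h
    omega
  let b := stdOrthonormalBasis ℝ K
  let v : Fin (n - k) → EuclideanSpace ℝ (Fin n) :=
    fun j => (b (Fin.castLE hdim j) : EuclideanSpace ℝ (Fin n))
  have hon : Orthonormal ℝ v := by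
    have h1 : Orthonormal ℝ (fun i => (b i : EuclideanSpace ℝ (Fin n))) :=
      K.subtypeₗᵢ.orthonormal_comp_iff.mpr b.orthonormal
    exact h1.comp _ (Fin.castLE_injective _)
  have hker : ∀ j, M.mulVec (fun a => v j a) = 0 := by
    intro j
    have hmem : (v j : EuclideanSpace ℝ (Fin n)) ∈ K := (b (Fin.castLE hdim j)).2
    rw [hK, LinearMap.mem_ker] at hmem
    have h0 : f (v j) = M.mulVec (e (v j)) := by
      simp only [f, LinearMap.comp_apply, Matrix.mulVecLin_apply, LinearEquiv.coe_coe]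
    have h1 : e (v j) = fun a => v j a := rfl
    rw [h0, h1] at hmem
    exact hmem
  refine ⟨Matrix.of (fun a j => v j a), ?_, ?_⟩
  · ext i j
    have h2 := orthonormal_iff_ite.mp hon i j
    have h3 : (inner ℝ (v i) (v j) : ℝ) = ∑ a, v i a * v j a := by
      simp [PiLp.inner_apply, RCLike.inner_apply, starRingEnd_apply]
      exact Finset.sum_congr rfl fun a _ => mul_comm _ _
    rw [h3] at h2
    simp only [Matrix.mul_apply, Matrix.transpose_apply, Matrix.of_apply, Matrix.one_apply]
    rw [h2]
  · ext i j
    have := congrFun (hker j) i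
    simpa [Matrix.mul_apply, Matrix.mulVec, dotProduct] using this



lemma conj_back {n : ℕ} (U Y : Matrix (Fin n) (Fin n) ℝ) (hU1 : Uᵀ * U = 1) :
    Uᵀ * (U * Y * Uᵀ) * U = Y := by
  simp only [Matrix.mul_assoc]
  rw [hU1, Matrix.mul_one, ← Matrix.mul_assoc, hU1, Matrix.one_mul]

lemma spectral_perm {n : ℕ} (L : Matrix (Fin n) (Fin n) ℝ) (hL : L.IsHermitian)
    (lam : Fin n → ℝ) (σ : Equiv.Perm (Fin n)) (hperm : ∀ i, lam i = hL.eigenvalues (σ i)) :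
    ∃ U : Matrix (Fin n) (Fin n) ℝ, Uᵀ * U = 1 ∧ U * Uᵀ = 1 ∧
      L = U * Matrix.diagonal lam * Uᵀ := by
  set U0 : Matrix (Fin n) (Fin n) ℝ := (hL.eigenvectorUnitary : Matrix (Fin n) (Fin n) ℝ) with hU0def
  have hmem := hL.eigenvectorUnitary.2
  have hU01 : U0ᵀ * U0 = 1 := by
    rw [← Matrix.conjTranspose_eq_transpose_of_trivial, ← Matrix.star_eq_conjTranspose]
    exact hmem.1
  have hU02 : U0 * U0ᵀ = 1 := by
    rw [← Matrix.conjTranspose_eq_transpose_of_trivial, ← Matrix.star_eq_conjTranspose]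
    exact hmem.2
  have hLdec : L = U0 * Matrix.diagonal hL.eigenvalues * U0ᵀ := by
    have h := hL.spectral_theorem
    rw [Unitary.conjStarAlgAut_apply, Matrix.star_eq_conjTranspose, Matrix.conjTranspose_eq_transpose_of_trivial] at h
    exact h
  refine ⟨Matrix.of (fun i j => U0 i (σ j)), ?_, ?_, ?_⟩
  · ext i j
    have h1 := congrFun (congrFun hU01 (σ i)) (σ j)
    simp only [Matrix.mul_apply, Matrix.transpose_apply, Matrix.one_apply] at h1 ⊢
    simp only [Matrix.of_apply]
    rw [h1]
    simp [EmbeddingLike.apply_eq_iff_eq]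
  · ext a b
    have h1 := congrFun (congrFun hU02 a) b
    simp only [Matrix.mul_apply, Matrix.transpose_apply] at h1 ⊢
    simp only [Matrix.of_apply]
    rw [← Equiv.sum_comp σ (fun j' => U0 a j' * U0 b j')] at h1
    exact h1
  · rw [hLdec]
    ext a b
    have lhs_eq : (U0 * Matrix.diagonal hL.eigenvalues * U0ᵀ) a b
        = ∑ i, U0 a i * hL.eigenvalues i * U0 b i := by
      simp only [Matrix.mul_apply, Matrix.diagonal_apply, Matrix.transpose_apply, mul_ite,
        mul_zero, ite_mul, zero_mul, Finset.sum_ite_eq, Finset.sum_ite_eq', Finset.mem_univ,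
        if_true]
    have rhs_eq : (Matrix.of (fun i j => U0 i (σ j)) * Matrix.diagonal lam *
        (Matrix.of (fun i j => U0 i (σ j)))ᵀ) a b
        = ∑ i, U0 a (σ i) * hL.eigenvalues (σ i) * U0 b (σ i) := by
      simp only [Matrix.mul_apply, Matrix.diagonal_apply, Matrix.transpose_apply, Matrix.of_apply,
        mul_ite, mul_zero, ite_mul, zero_mul, Finset.sum_ite_eq, Finset.sum_ite_eq',
        Finset.mem_univ, if_true]
      exact Finset.sum_congr rfl fun i _ => by rw [hperm i]
    rw [lhs_eq, rhs_eq, ← Equiv.sum_comp σ (fun i => U0 a i * hL.eigenvalues i * U0 b i)]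



lemma quad_nonneg {n : ℕ} (A : Matrix (Fin n) (Fin n) ℝ) (hsymm : A.IsSymm)
    (hnonneg : ∀ i j, 0 ≤ A i j) (d : Fin n → ℝ) (hd : ∀ i, d i = ∑ j, A i j)
    (hdpos : ∀ i, 0 < d i) (x : Fin n → ℝ) :
    0 ≤ ∑ a, ∑ b, x a * ((1 + (Matrix.diagonal fun i => (Real.sqrt (d i))⁻¹) * A *
      (Matrix.diagonal fun i => (Real.sqrt (d i))⁻¹)) a b) * x b := by
  set f : Fin n → ℝ := fun i => (Real.sqrt (d i))⁻¹ with hf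
  set y : Fin n → ℝ := fun i => x i * f i with hy
  have hentry : ∀ a b, (1 + Matrix.diagonal f * A * Matrix.diagonal f) a b
      = (if a = b then (1 : ℝ) else 0) + f a * A a b * f b := by
    intro a b
    rw [Matrix.add_apply, Matrix.mul_diagonal, Matrix.diagonal_mul, Matrix.one_apply]
  have hsq : ∀ a, d a * y a ^ 2 = x a ^ 2 := by
    intro a
    have h1 : Real.sqrt (d a) ^ 2 = d a := Real.sq_sqrt (hdpos a).le
    have h2 : Real.sqrt (d a) ≠ 0 := Real.sqrt_ne_zero'.mpr (hdpos a)
    rw [hy]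
    simp only [hf]
    field_simp
    nlinarith [h1]
  have key : ∑ a, ∑ b, x a * ((1 + Matrix.diagonal f * A * Matrix.diagonal f) a b) * x b
      = ∑ a, x a ^ 2 + ∑ a, ∑ b, A a b * y a * y b := by
    have hterm : ∀ a b, x a * ((1 + Matrix.diagonal f * A * Matrix.diagonal f) a b) * x b
        = (if a = b then x a * x b else 0) + A a b * y a * y b := by
      intro a b
      rw [hentry a b]
      by_cases h : a = b
      · subst h; simp only [eq_self_iff_true, if_true, hy]; ring
      · simp only [if_neg h, hy]; ring
    simp only [hterm, Finset.sum_add_distrib, Finset.sum_ite_eq, Finset.mem_univ, if_true,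
      ← pow_two]
  have t1 : ∑ a, ∑ b, A a b * y a ^ 2 = ∑ a, x a ^ 2 := by
    refine Finset.sum_congr rfl fun a _ => ?_
    rw [← Finset.sum_mul, ← hd a, hsq a]
  have t2 : ∑ a, ∑ b, A a b * y b ^ 2 = ∑ b, x b ^ 2 := by
    rw [Finset.sum_comm]
    refine Finset.sum_congr rfl fun b _ => ?_
    have hcol : ∀ a, A a b = A b a := fun a => hsymm.apply b a
    calc ∑ a, A a b * y b ^ 2 = (∑ a, A b a) * y b ^ 2 := by
          rw [Finset.sum_mul]; exact Finset.sum_congr rfl fun a _ => by rw [hcol a]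
      _ = x b ^ 2 := by rw [← hd b, hsq b]
  have expand2 : ∑ a, ∑ b, A a b * (y a + y b) ^ 2
      = 2 * (∑ a, x a ^ 2 + ∑ a, ∑ b, A a b * y a * y b) := by
    have e1 : ∀ a b : Fin n, A a b * (y a + y b) ^ 2
        = A a b * y a ^ 2 + A a b * y b ^ 2 + 2 * (A a b * y a * y b) := fun a b => by ring
    simp only [e1, Finset.sum_add_distrib]
    rw [t1, t2]
    simp only [← Finset.mul_sum]
    ring
  have pos2 : 0 ≤ ∑ a, ∑ b, A a b * (y a + y b) ^ 2 :=
    Finset.sum_nonneg fun a _ => Finset.sum_nonneg fun b _ =>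
      mul_nonneg (hnonneg a b) (sq_nonneg _)
  rw [expand2] at pos2
  rw [key]
  linarith


lemma diag_lower (n k : ℕ) (μ : Fin n → ℝ) (hanti : Antitone μ)
    (hpos : ∀ i, 0 ≤ μ i) (B : Matrix (Fin n) (Fin n) ℝ)
    (V : Matrix (Fin n) (Fin (n - k)) ℝ) (hV : Vᵀ * V = 1) (hBV : B * V = 0) :
    ∑ a ∈ Finset.univ.filter (fun a : Fin n => k ≤ (a : ℕ)), μ a ^ 2
      ≤ ∑ i, ∑ j, ((Matrix.diagonal μ - B) i j) ^ 2 := by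
  by_cases hkn : k < n
  case neg =>
    have hempty : Finset.univ.filter (fun a : Fin n => k ≤ (a : ℕ)) = ∅ := by
      ext a
      simp only [Finset.mem_filter, Finset.mem_univ, true_and, Finset.notMem_empty, iff_false]
      have := a.isLt; omega
    rw [hempty]
    simp only [Finset.sum_empty]
    positivity
  case pos =>
  set X := Matrix.diagonal μ - B with hX
  set c : Fin n → ℝ := fun a => ∑ j, (V a j) ^ 2 with hc
  set P := V * Vᵀ with hP
  have hPidem : P * P = P := by
    rw [hP]
    calc V * Vᵀ * (V * Vᵀ) = V * (Vᵀ * V) * Vᵀ := by simp only [Matrix.mul_assoc]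
      _ = V * Vᵀ := by rw [hV, Matrix.mul_one]
  have hPsymm : ∀ a l, P l a = P a l := by
    intro a l
    simp only [hP, Matrix.mul_apply, Matrix.transpose_apply]
    exact Finset.sum_congr rfl fun j _ => mul_comm _ _
  have hcP : ∀ a, c a = P a a := by
    intro a
    simp only [hc, hP, Matrix.mul_apply, Matrix.transpose_apply]
    exact Finset.sum_congr rfl fun j _ => (pow_two _)
  have hc0 : ∀ a, 0 ≤ c a := fun a => Finset.sum_nonneg fun j _ => sq_nonneg _
  have hc1 : ∀ a, c a ≤ 1 := by
    intro a
    have h1 : P a a = ∑ l, (P a l) ^ 2 := by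
      conv_lhs => rw [← hPidem]
      simp only [Matrix.mul_apply]
      exact Finset.sum_congr rfl fun l _ => by rw [hPsymm a l, pow_two]
    have h2 : (P a a) ^ 2 ≤ ∑ l, (P a l) ^ 2 :=
      Finset.single_le_sum (f := fun l => (P a l) ^ 2) (fun l _ => sq_nonneg _)
        (Finset.mem_univ a)
    have h3 := hcP a
    have h4 := hc0 a
    nlinarith
  have hcsum : ∑ a, c a = ((n - k : ℕ) : ℝ) := by
    have h5 : ∑ a, c a = (Vᵀ * V).trace := by
      rw [← Matrix.trace_mul_comm, hP] at *
      rw [Matrix.trace]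
      refine Finset.sum_congr rfl fun a _ => ?_
      rw [hcP a]; rfl
    rw [h5, hV, Matrix.trace_one]
    simp
  have hν2 : Antitone fun a : Fin n => μ a ^ 2 := fun a b hab =>
    pow_le_pow_left₀ (hpos b) (hanti hab) 2
  have step1 := rearrange n k hkn (fun a => μ a ^ 2) c hν2 hc0 hc1 hcsum
  have step2 : ∑ a, μ a ^ 2 * c a = ((X * V)ᵀ * (X * V)).trace := by
    rw [← frob_eq_trace]
    have hXV : X * V = Matrix.diagonal μ * V := by rw [hX, Matrix.sub_mul, hBV, sub_zero]
    rw [hXV]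
    refine Finset.sum_congr rfl fun a _ => ?_
    rw [hc, Finset.mul_sum]
    refine Finset.sum_congr rfl fun j _ => ?_
    rw [Matrix.diagonal_mul, mul_pow]
  have step3 := frob_mul_le X V hV
  rw [← frob_eq_trace (X := X)] at step3
  calc ∑ a ∈ Finset.univ.filter (fun a : Fin n => k ≤ (a : ℕ)), μ a ^ 2
      ≤ ∑ a, μ a ^ 2 * c a := step1
    _ = ((X * V)ᵀ * (X * V)).trace := step2
    _ ≤ ∑ i, ∑ j, X i j ^ 2 := step3


end PCAAux

/-- **Optimality of the spectral-embedding PCA value.** Let `λ₁ ≤ … ≤ λ_n`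
be the eigenvalues of the normalized Laplacian `L` counted with multiplicity (a monotone
enumeration `lam`, a permutation of Mathlib's `hL.eigenvalues`), and let
`𝒜 = I + D^{-1/2} A D^{-1/2} `. For every `H ∈ ℝ^{n×k}` and every diagonal
`W ∈ ℝ^{k×k}` one has `‖𝒜 − H W Hᵀ‖_F² ≥ ∑_{i=k+1}^n (2 − λ_i)²`; hence the minimum of
`‖𝒜 − H W Hᵀ‖_F²` over all such `H` and diagonal `W` equals `∑_{i=k+1}^n (2 − λ_i)²`. -/
theorem spectral_embedding_pca_optimality
    (n k : ℕ) (hn : 1 ≤ n) (hk : 1 ≤ k) (hkn : k ≤ n)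
    (A : Matrix (Fin n) (Fin n) ℝ)
    (hsymm : A.IsSymm) (hnonneg : ∀ i j, 0 ≤ A i j)
    (d : Fin n → ℝ) (hd : ∀ i, d i = ∑ j, A i j) (hdpos : ∀ i, 0 < d i)
    (L Acal : Matrix (Fin n) (Fin n) ℝ)
    (hLdef : L = 1 - (Matrix.diagonal fun i => (Real.sqrt (d i))⁻¹) * A *
      (Matrix.diagonal fun i => (Real.sqrt (d i))⁻¹))
    (hAcal : Acal = 1 + (Matrix.diagonal fun i => (Real.sqrt (d i))⁻¹) * A *
      (Matrix.diagonal fun i => (Real.sqrt (d i))⁻¹))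
    (hL : L.IsHermitian)
    -- `lam` is a monotone enumeration of the eigenvalues of `L`, with multiplicity
    (lam : Fin n → ℝ) (hmono : Monotone lam)
    (σ : Equiv.Perm (Fin n)) (hperm : ∀ i, lam i = hL.eigenvalues (σ i)) :
    (∀ (H : Matrix (Fin n) (Fin k) ℝ) (W : Matrix (Fin k) (Fin k) ℝ),
        (∀ i j, i ≠ j → W i j = 0) →
        ∑ i ∈ Finset.univ.filter (fun i : Fin n => k ≤ (i : ℕ)), (2 - lam i) ^ 2 ≤
          ∑ i, ∑ j, ((Acal - H * W * Hᵀ) i j) ^ 2) ∧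
    IsLeast
      {v : ℝ | ∃ (H : Matrix (Fin n) (Fin k) ℝ) (W : Matrix (Fin k) (Fin k) ℝ),
          (∀ i j, i ≠ j → W i j = 0) ∧
          v = ∑ i, ∑ j, ((Acal - H * W * Hᵀ) i j) ^ 2}
      (∑ i ∈ Finset.univ.filter (fun i : Fin n => k ≤ (i : ℕ)), (2 - lam i) ^ 2) := by
  classical
  obtain ⟨U, hU1, hU2, hLU⟩ := PCAAux.spectral_perm L hL lam σ hperm
  set μ : Fin n → ℝ := fun i => 2 - lam i with hμ
  have hanti : Antitone μ := fun a b hab => by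
    simp only [hμ]; have := hmono hab; linarith
  have hAcal2 : Acal = 1 + (1 - L) := by
    have hN : (1 : Matrix (Fin n) (Fin n) ℝ) - L = (Matrix.diagonal fun i => (Real.sqrt (d i))⁻¹)
        * A * (Matrix.diagonal fun i => (Real.sqrt (d i))⁻¹) := by
      rw [hLdef, sub_sub_cancel]
    rw [hAcal, ← hN]
  have hAcalDecomp : Acal = U * Matrix.diagonal μ * Uᵀ := by
    have hdiagμ : Matrix.diagonal μ = (1 + (1 - Matrix.diagonal lam) : Matrix (Fin n) (Fin n) ℝ) := by
      ext i j
      by_cases h : i = j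
      · subst h
        simp [hμ, Matrix.diagonal_apply_eq, Matrix.one_apply_eq]
        ring
      · simp [Matrix.diagonal_apply_ne _ h, Matrix.one_apply_ne h]
    have hstep : U * Matrix.diagonal μ * Uᵀ
        = U * Uᵀ + (U * Uᵀ - U * Matrix.diagonal lam * Uᵀ) := by
      rw [hdiagμ]
      noncomm_ring
    rw [hAcal2, hstep, hU2, ← hLU]
  have hUAcalU : Uᵀ * Acal * U = Matrix.diagonal μ := by
    rw [hAcalDecomp, PCAAux.conj_back U _ hU1]
  have hmuNonneg : ∀ i, 0 ≤ μ i := by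
    intro i
    have hq := PCAAux.quad_nonneg A hsymm hnonneg d hd hdpos (fun a => U a i)
    rw [← hAcal] at hq
    have hent : μ i = ∑ a, ∑ b, U a i * Acal a b * U b i := by
      have h0 : μ i = (Uᵀ * Acal * U) i i := by rw [hUAcalU, Matrix.diagonal_apply_eq]
      rw [h0]
      simp only [Matrix.mul_apply, Matrix.transpose_apply, Finset.sum_mul]
      rw [Finset.sum_comm]
    rw [hent]; exact hq
  have part1 : ∀ (H : Matrix (Fin n) (Fin k) ℝ) (W : Matrix (Fin k) (Fin k) ℝ),
      (∀ i j, i ≠ j → W i j = 0) →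
      ∑ i ∈ Finset.univ.filter (fun i : Fin n => k ≤ (i : ℕ)), (2 - lam i) ^ 2 ≤
        ∑ i, ∑ j, ((Acal - H * W * Hᵀ) i j) ^ 2 := by
    intro H W _
    obtain ⟨V, hV1, hV2⟩ := PCAAux.exists_V n k (Hᵀ * U)
    have hBV : (Uᵀ * (H * W * Hᵀ) * U) * V = 0 := by
      have h1 : Uᵀ * (H * W * Hᵀ) * U = Uᵀ * H * W * (Hᵀ * U) := by
        simp only [Matrix.mul_assoc]
      rw [h1, Matrix.mul_assoc, hV2, Matrix.mul_zero]
    have main := PCAAux.diag_lower n k μ hanti hmuNonneg (Uᵀ * (H * W * Hᵀ) * U) V hV1 hBV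
    have hXX : Matrix.diagonal μ - Uᵀ * (H * W * Hᵀ) * U = Uᵀ * (Acal - H * W * Hᵀ) * U := by
      rw [Matrix.mul_sub, Matrix.sub_mul, hUAcalU]
    rw [hXX, PCAAux.frob_conj U _ hU1 hU2] at main
    exact main
  refine ⟨part1, ?_, ?_⟩
  · -- membership
    set H₀ : Matrix (Fin n) (Fin k) ℝ := Matrix.of (fun i j => U i (Fin.castLE hkn j)) with hH₀
    set W₀ : Matrix (Fin k) (Fin k) ℝ :=
      Matrix.diagonal (fun j => μ (Fin.castLE hkn j)) with hW₀
    set g' : Fin n → ℝ := fun i => if (i : ℕ) < k then μ i else 0 with hg'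
    set g'' : Fin n → ℝ := fun i => if (i : ℕ) < k then 0 else μ i with hg''
    have hsetmap : ((Finset.univ : Finset (Fin k)).map
        ⟨Fin.castLE hkn, Fin.castLE_injective hkn⟩)
        = Finset.univ.filter (fun i : Fin n => (i : ℕ) < k) := by
      ext i
      simp only [Finset.mem_map, Finset.mem_univ, true_and, Function.Embedding.coeFn_mk,
        Finset.mem_filter]
      constructor
      · rintro ⟨j, rfl⟩; simpa using j.isLt
      · intro h; exact ⟨⟨(i : ℕ), h⟩, Fin.ext rfl⟩
    have hsum_trans : ∀ F : Fin n → ℝ,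
        ∑ i ∈ Finset.univ.filter (fun i : Fin n => (i : ℕ) < k), F i
        = ∑ j : Fin k, F (Fin.castLE hkn j) := by
      intro F; rw [← hsetmap, Finset.sum_map]; rfl
    have claim1 : H₀ * W₀ * H₀ᵀ = U * Matrix.diagonal g' * Uᵀ := by
      ext a b
      have lhs : (H₀ * W₀ * H₀ᵀ) a b
          = ∑ j : Fin k, μ (Fin.castLE hkn j) *
              (U a (Fin.castLE hkn j) * U b (Fin.castLE hkn j)) := by
        simp only [hH₀, hW₀, Matrix.mul_apply, Matrix.diagonal_apply, Matrix.transpose_apply,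
          Matrix.of_apply, mul_ite, mul_zero, ite_mul, zero_mul, Finset.sum_ite_eq,
          Finset.sum_ite_eq', Finset.mem_univ, if_true]
        exact Finset.sum_congr rfl fun j _ => by ring
      have rhs : (U * Matrix.diagonal g' * Uᵀ) a b = ∑ i : Fin n, g' i * (U a i * U b i) := by
        simp only [Matrix.mul_apply, Matrix.diagonal_apply, Matrix.transpose_apply, mul_ite,
          mul_zero, ite_mul, zero_mul, Finset.sum_ite_eq, Finset.sum_ite_eq', Finset.mem_univ,
          if_true]
        exact Finset.sum_congr rfl fun i _ => by ring
      rw [lhs, rhs]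
      have hsplit : ∑ i : Fin n, g' i * (U a i * U b i)
          = ∑ i ∈ Finset.univ.filter (fun i : Fin n => (i : ℕ) < k), μ i * (U a i * U b i) := by
        rw [Finset.sum_filter]
        refine Finset.sum_congr rfl fun i _ => ?_
        by_cases h : (i : ℕ) < k <;> simp [hg', h]
      rw [hsplit, hsum_trans]
    have claim2 : Acal - H₀ * W₀ * H₀ᵀ = U * Matrix.diagonal g'' * Uᵀ := by
      have hdd : Matrix.diagonal μ - Matrix.diagonal g' = Matrix.diagonal g'' := by
        ext i j
        by_cases h : i = j
        · subst h
          simp only [Matrix.sub_apply, Matrix.diagonal_apply_eq]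
          by_cases h2 : (i : ℕ) < k <;> simp [hg', hg'', h2]
        · simp [Matrix.sub_apply, Matrix.diagonal_apply_ne _ h]
      rw [hAcalDecomp, claim1, ← Matrix.sub_mul, ← Matrix.mul_sub, hdd]
    have hval : ∑ i, ∑ j, ((Acal - H₀ * W₀ * H₀ᵀ) i j) ^ 2
        = ∑ i ∈ Finset.univ.filter (fun i : Fin n => k ≤ (i : ℕ)), (2 - lam i) ^ 2 := by
      rw [claim2]
      have h1 : ∑ i, ∑ j, ((U * Matrix.diagonal g'' * Uᵀ) i j) ^ 2
          = ∑ i, ∑ j, ((Matrix.diagonal g'') i j) ^ 2 := by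
        have h2 := PCAAux.frob_conj U (U * Matrix.diagonal g'' * Uᵀ) hU1 hU2
        rw [PCAAux.conj_back U _ hU1] at h2
        exact h2.symm
      rw [h1]
      have h3 : ∀ i : Fin n, ∑ j, ((Matrix.diagonal g'') i j) ^ 2 = g'' i ^ 2 := by
        intro i
        rw [Finset.sum_eq_single_of_mem i (Finset.mem_univ i)]
        · rw [Matrix.diagonal_apply_eq]
        · intro j _ hj
          rw [Matrix.diagonal_apply_ne' _ hj]
          exact zero_pow two_ne_zero
      rw [Finset.sum_congr rfl fun i _ => h3 i]
      have h4 : ∀ i : Fin n, g'' i ^ 2 = if k ≤ (i : ℕ) then (2 - lam i) ^ 2 else 0 := by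
        intro i
        by_cases h : (i : ℕ) < k
        · simp [hg'', h, Nat.not_le.mpr h]
        · simp [hg'', h, Nat.le_of_not_lt h, hμ]
      rw [Finset.sum_congr rfl fun i _ => h4 i]
      exact (Finset.sum_filter _ _).symm
    exact ⟨H₀, W₀, fun i j hij => Matrix.diagonal_apply_ne _ hij, hval.symm⟩
  · -- lower bound
    rintro v ⟨H, W, hW, rfl⟩
    exact part1 H W hW
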